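/- arXiv:2403.02627 — 5 statements merged into one kernel-verified Lean document; each statement's English description precedes it below -/
import Mathlib

section
/- For every d ≥ 5, there exists a mass distribution μ on ℝ^d (supported on the moment curve) that admits no 2^d-partition by d hyperplanes: for any d affine hyperplanes, at least one of the 2^d open orthants they determine has μ-measure zero, hence the orthants cannot all have measure μ(ℝ^d)/2^d > 0. -/
open MeasureTheory
open scoped RealInnerProductSpace

noncomputable section

/-- The moment curve `{(t, t², …, t^d) : t ∈ ℝ}` in ℝ^d. -/
def momentCurve (d : ℕ) : Set (EuclideanSpace ℝ (Fin d)) :=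
  {x | ∃ t : ℝ, ∀ i : Fin d, x i = t ^ ((i : ℕ) + 1)}

def halfSpaceD {d : ℕ} (v : EuclideanSpace ℝ (Fin d)) (a : ℝ) (s : Bool) :
    Set (EuclideanSpace ℝ (Fin d)) :=
  if s then {x | a < ⟪v, x⟫} else {x | ⟪v, x⟫ < a}

def orthantD {d k : ℕ} (v : Fin k → EuclideanSpace ℝ (Fin d)) (a : Fin k → ℝ)
    (α : Fin k → Bool) : Set (EuclideanSpace ℝ (Fin d)) :=
  ⋂ i, halfSpaceD (v i) (a i) (α i)

/-!
Take for `μ` the push-forward of Lebesgue measure on `[0, 1]` along `t ↦ (t, t², …, t^d)`.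
The hyperplane `⟪v, x⟫ = a` meets the curve at the real roots of the nonzero polynomial
`∑ v_j X^(j+1) - a` of degree at most `d`, so `d` hyperplanes cut the curve at a set `R` of at
most `d²` parameters. Off `R`, the orthant containing the curve point can only change when the
parameter crosses a point of `R`, so at most `d² + 1 < 2^d` orthants meet the curve outside the
`μ`-null set `R`.
-/

open Set Polynomial
open scoped Finset

lemma lt_iff_lt_of_forall_ne_of_mem_uIcc {g : ℝ → ℝ} (hg : Continuous g) {c s s' : ℝ}
    (h : ∀ r ∈ uIcc s s', g r ≠ c) : c < g s ↔ c < g s' := by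
  have hc : c ∉ uIcc (g s) (g s') := fun hc => by
    obtain ⟨r, hr, hrc⟩ := intermediate_value_uIcc hg.continuousOn hc
    exact h r hr hrc
  rw [mem_uIcc] at hc
  grind

lemma forall_notMem_uIcc_of_card_filter_lt_eq {S : Finset ℝ} {s s' : ℝ} (hs : s ∉ S)
    (hs' : s' ∉ S) (h : #(S.filter (· < s)) = #(S.filter (· < s'))) :
    ∀ r ∈ S, r ∉ uIcc s s' := by
  wlog hle : s ≤ s' generalizing s s'
  · rw [uIcc_comm]
    exact this hs' hs h.symm (le_of_not_ge hle)
  intro r hr hrs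
  rw [uIcc_of_le hle] at hrs
  have hsub : S.filter (· < s) ⊆ S.filter (· < s') :=
    Finset.monotone_filter_right S fun _ _ hx => hx.trans_le hle
  have hr' : r ∈ S.filter (· < s') :=
    Finset.mem_filter.2 ⟨hr, lt_of_le_of_ne hrs.2 (ne_of_mem_of_not_mem hr hs')⟩
  rw [← Finset.eq_of_subset_of_card_le hsub h.ge, Finset.mem_filter] at hr'
  exact hr'.2.not_ge hrs.1

/-- Points off `S` are classified by how many points of `S` lie below them. -/
lemma exists_forall_ne_of_card_lt {β : Type*} [Fintype β] (S : Finset ℝ) (f : ℝ → β)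
    (hf : ∀ s s', (∀ r ∈ S, r ∉ uIcc s s') → f s = f s') (hS : #S + 1 < Fintype.card β) :
    ∃ b, ∀ t ∉ S, f t ≠ b := by
  by_contra! hsurj
  choose t htS hft using hsurj
  let c : β → Fin (#S + 1) := fun b =>
    ⟨#(S.filter (· < t b)), Nat.lt_succ_of_le (Finset.card_filter_le _ _)⟩
  have hc : Function.Injective c := fun b b' hbb' => by
    rw [← hft b, ← hft b']
    exact hf _ _ (forall_notMem_uIcc_of_card_filter_lt_eq (htS b) (htS b') (Fin.mk.inj_iff.1 hbb'))
  have := Fintype.card_le_of_injective c hc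
  simp only [Fintype.card_fin] at this
  omega

section MomentCurve

variable {d : ℕ}

def momentCurveMap (d : ℕ) (t : ℝ) : EuclideanSpace ℝ (Fin d) :=
  WithLp.toLp 2 fun i => t ^ ((i : ℕ) + 1)

lemma momentCurveMap_mem_momentCurve (t : ℝ) : momentCurveMap d t ∈ momentCurve d :=
  ⟨t, fun _ => rfl⟩

lemma continuous_momentCurveMap (d : ℕ) : Continuous (momentCurveMap d) :=
  (PiLp.continuous_toLp 2 _).comp (continuous_pi fun _ => continuous_pow _)

lemma momentCurveMap_injective (hd : 0 < d) : Function.Injective (momentCurveMap d) :=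
  fun s t hst => by simpa [momentCurveMap] using congrArg (· ⟨0, hd⟩) hst

lemma measurableEmbedding_momentCurveMap (hd : 0 < d) : MeasurableEmbedding (momentCurveMap d) :=
  (continuous_momentCurveMap d).measurableEmbedding (momentCurveMap_injective hd)

def hyperplanePoly (v : EuclideanSpace ℝ (Fin d)) (a : ℝ) : ℝ[X] :=
  ∑ j : Fin d, C (v j) * X ^ ((j : ℕ) + 1) - C a

lemma eval_hyperplanePoly (v : EuclideanSpace ℝ (Fin d)) (a t : ℝ) :
    (hyperplanePoly v a).eval t = ⟪v, momentCurveMap d t⟫ - a := by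
  simp only [hyperplanePoly, eval_sub, eval_finsetSum, eval_mul, eval_C, eval_pow, eval_X,
    momentCurveMap, PiLp.inner_apply, RCLike.inner_apply, conj_trivial, mul_comm]

lemma coeff_hyperplanePoly_succ (v : EuclideanSpace ℝ (Fin d)) (a : ℝ) (j : Fin d) :
    (hyperplanePoly v a).coeff ((j : ℕ) + 1) = v j := by
  simp [hyperplanePoly, coeff_X_pow, Fin.val_inj]

lemma hyperplanePoly_ne_zero {v : EuclideanSpace ℝ (Fin d)} (hv : v ≠ 0) (a : ℝ) :
    hyperplanePoly v a ≠ 0 := by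
  obtain ⟨j, hj⟩ : ∃ j, v j ≠ 0 := by
    by_contra! h
    exact hv (PiLp.ext h)
  intro h
  exact hj (by simpa [h] using (coeff_hyperplanePoly_succ v a j).symm)

lemma natDegree_hyperplanePoly_le (v : EuclideanSpace ℝ (Fin d)) (a : ℝ) :
    (hyperplanePoly v a).natDegree ≤ d := by
  refine (natDegree_sub_le _ _).trans (max_le ?_ (by simp))
  refine natDegree_sum_le_of_forall_le _ _ fun j _ => (natDegree_C_mul_le _ _).trans ?_
  simp [j.isLt]

lemma mem_roots_hyperplanePoly {v : EuclideanSpace ℝ (Fin d)} (hv : v ≠ 0) {a t : ℝ} :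
    t ∈ (hyperplanePoly v a).roots ↔ ⟪v, momentCurveMap d t⟫ = a := by
  rw [mem_roots (hyperplanePoly_ne_zero hv a), IsRoot, eval_hyperplanePoly, sub_eq_zero]

lemma finite_momentCurveMap_preimage_hyperplane {v : EuclideanSpace ℝ (Fin d)} (hv : v ≠ 0)
    (a : ℝ) : (momentCurveMap d ⁻¹' {x | ⟪v, x⟫ = a}).Finite :=
  (hyperplanePoly v a).roots.toFinset.finite_toSet.subset fun t ht => by
    simpa [mem_roots_hyperplanePoly hv] using ht

def signPattern {k : ℕ} (v : Fin k → EuclideanSpace ℝ (Fin d)) (a : Fin k → ℝ)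
    (x : EuclideanSpace ℝ (Fin d)) : Fin k → Bool :=
  fun i => decide (a i < ⟪v i, x⟫)

lemma signPattern_eq_of_mem_orthantD {k : ℕ} {v : Fin k → EuclideanSpace ℝ (Fin d)}
    {a : Fin k → ℝ} {α : Fin k → Bool} {x : EuclideanSpace ℝ (Fin d)}
    (hx : x ∈ orthantD v a α) : signPattern v a x = α := by
  funext i
  have hi := mem_iInter.1 hx i
  cases hα : α i <;> simp only [hα, halfSpaceD, Bool.false_eq_true, if_true, if_false,
    mem_ofPred_eq] at hi <;> simp [signPattern, hi, hi.le]

lemma exists_finite_momentCurveMap_preimage_orthantD {k : ℕ} (hk : k * d + 1 < 2 ^ k)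
    (v : Fin k → EuclideanSpace ℝ (Fin d)) (a : Fin k → ℝ) (hv : ∀ i, v i ≠ 0) :
    ∃ α, (momentCurveMap d ⁻¹' orthantD v a α).Finite := by
  let R := Finset.univ.biUnion fun i => (hyperplanePoly (v i) (a i)).roots.toFinset
  have hR : #R ≤ k * d := by
    refine (Finset.card_biUnion_le_card_mul _ _ d fun i _ => ?_).trans (by simp)
    exact (Multiset.toFinset_card_le _).trans
      ((card_roots' _).trans (natDegree_hyperplanePoly_le _ _))
  have hmem : ∀ {t i}, ⟪v i, momentCurveMap d t⟫ = a i → t ∈ R := fun {t i} h =>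
    Finset.mem_biUnion.2 ⟨i, Finset.mem_univ i,
      Multiset.mem_toFinset.2 ((mem_roots_hyperplanePoly (hv i)).2 h)⟩
  have hconst : ∀ s s', (∀ r ∈ R, r ∉ uIcc s s') →
      signPattern v a (momentCurveMap d s) = signPattern v a (momentCurveMap d s') :=
    fun s s' h => funext fun i => decide_eq_decide.2 <|
      lt_iff_lt_of_forall_ne_of_mem_uIcc (continuous_const.inner (continuous_momentCurveMap d))
        fun r hr hri => h r (hmem hri) hr
  obtain ⟨α, hα⟩ := exists_forall_ne_of_card_lt R _ hconst (by simp; omega)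
  exact ⟨α, R.finite_toSet.subset fun t ht => by
    by_contra htR
    exact hα t htR (signPattern_eq_of_mem_orthantD ht)⟩

end MomentCurve

lemma Nat.mul_self_add_one_lt_two_pow {n : ℕ} (hn : 5 ≤ n) : n * n + 1 < 2 ^ n := by
  induction n, hn using Nat.le_induction with
  | base => norm_num
  | succ n hn ih => rw [pow_succ]; nlinarith

/-- For every `d ≥ 5` there is a mass distribution on ℝ^d, supported on the moment curve,
admitting no `2^d`-partition by `d` hyperplanes: some open orthant always has measure zero
(hence the orthants cannot all have measure `μ(ℝ^d)/2^d > 0`). -/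
theorem stmt4 (d : ℕ) (hd : 5 ≤ d) :
    ∃ μ : Measure (EuclideanSpace ℝ (Fin d)), IsFiniteMeasure μ ∧ μ Set.univ ≠ 0 ∧
      (∀ v : EuclideanSpace ℝ (Fin d), v ≠ 0 → ∀ a : ℝ, μ {x | ⟪v, x⟫ = a} = 0) ∧
      μ (momentCurve d)ᶜ = 0 ∧
      ∀ (v : Fin d → EuclideanSpace ℝ (Fin d)) (a : Fin d → ℝ), (∀ i, v i ≠ 0) →
        ∃ α : Fin d → Bool, μ (orthantD v a α) = 0 := by
  let ν := volume.restrict (Icc (0 : ℝ) 1)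
  have hγ := measurableEmbedding_momentCurveMap (d := d) (by omega)
  -- `MeasurableEmbedding.map_apply` holds for every set, measurable or not.
  have hnull : ∀ s, (momentCurveMap d ⁻¹' s).Finite → ν.map (momentCurveMap d) s = 0 :=
    fun s hs => by rw [hγ.map_apply]; exact hs.measure_zero ν
  refine ⟨ν.map (momentCurveMap d), inferInstance, ?_,
    fun v hv a => hnull _ (finite_momentCurveMap_preimage_hyperplane hv a), hnull _ ?_,
    fun v a hv => (exists_finite_momentCurveMap_preimage_orthantD
      (Nat.mul_self_add_one_lt_two_pow hd) v a hv).imp fun α => hnull _⟩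
  · simp [hγ.map_apply, ν]
  · have hrange : momentCurveMap d ⁻¹' momentCurve d = univ :=
      eq_univ_of_forall momentCurveMap_mem_momentCurve
    simp [preimage_compl, hrange]
end
end

section
/- Let d hyperplanes in ℝ^d be given, and suppose a mass distribution μ is supported on a curve γ that every hyperplane meets in at most d points. Then at most d² + 1 of the 2^d open orthants determined by the hyperplanes can intersect γ. In particular, if 2^d > d² + 1, some open orthant is disjoint from γ and hence has measure zero. -/
open MeasureTheory
open scoped RealInnerProductSpace

noncomputable section

/-- Auxiliary counting lemma: if between any two distinct elements of a finite set `T`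
of reals there is an element of a finite set `Z`, then `|T| ≤ |Z| + 1`. -/
lemma aux_card_between (T Z : Set ℝ) (hT : T.Finite) (hZ : Z.Finite)
    (h : ∀ t ∈ T, ∀ t' ∈ T, t < t' → ∃ z ∈ Z, t < z ∧ z < t') :
    T.ncard ≤ Z.ncard + 1 := by
  classical
  set Zf : Finset ℝ := hZ.toFinset with hZf
  set f : ℝ → WithBot ℝ := fun t => (Zf.filter (· < t)).max with hf
  have hmono : ∀ t ∈ T, ∀ t' ∈ T, t < t' → f t < f t' := by
    intro t ht t' ht' hlt
    obtain ⟨z, hz, h1, h2⟩ := h t ht t' ht' hlt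
    have hz' : z ∈ Zf.filter (· < t') := by
      simp only [Finset.mem_filter, hZf, hZ.mem_toFinset]
      exact ⟨hz, h2⟩
    have h3 : (↑z : WithBot ℝ) ≤ f t' := Finset.le_max hz'
    have h4 : f t ≤ (↑t : WithBot ℝ) := by
      apply Finset.max_le
      intro b hb
      simp only [Finset.mem_filter] at hb
      exact_mod_cast le_of_lt hb.2
    calc f t ≤ (↑t : WithBot ℝ) := h4
      _ < (↑z : WithBot ℝ) := by exact_mod_cast h1
      _ ≤ f t' := h3
  have hinj : Set.InjOn f T := by
    intro t ht t' ht' heq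
    by_contra hne
    rcases lt_or_gt_of_ne hne with hlt | hlt
    · exact absurd heq (ne_of_lt (hmono t ht t' ht' hlt))
    · exact absurd heq.symm (ne_of_lt (hmono t' ht' t ht hlt))
  have hmaps : ∀ t ∈ T, f t ∈ (↑(insert ⊥ (Zf.image (WithBot.some)) : Finset (WithBot ℝ)) :
      Set (WithBot ℝ)) := by
    intro t _
    have := Finset.max_mem_insert_bot_image_coe (Zf.filter (· < t))
    have hsub : insert ⊥ ((Zf.filter (· < t)).image (WithBot.some)) ⊆ insert ⊥ (Zf.image (WithBot.some)) :=
      Finset.insert_subset_insert _ (Finset.image_subset_image (Finset.filter_subset _ _))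
    simpa using hsub this
  have hcard := Set.ncard_le_ncard_of_injOn f hmaps hinj (Set.toFinite _)
  calc T.ncard ≤ _ := hcard
    _ = (insert ⊥ (Zf.image (WithBot.some)) : Finset (WithBot ℝ)).card := Set.ncard_coe_finset _
    _ ≤ (Zf.image (WithBot.some)).card + 1 := Finset.card_insert_le _ _
    _ ≤ Zf.card + 1 := by
        have := Finset.card_image_le (s := Zf) (f := ((WithBot.some) : ℝ → WithBot ℝ))
        omega
    _ = Z.ncard + 1 := by rw [hZf, ← Set.ncard_eq_toFinset_card Z hZ]

/-- If a curve `γ` (image of a continuous injective `g : ℝ → ℝ^d`) meets every hyperplane in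
at most `d` points, then at most `d² + 1` of the `2^d` open orthants of `d` given hyperplanes
intersect `γ`; in particular, if `2^d > d² + 1`, any measure supported on `γ` gives some open
orthant measure zero. -/
theorem stmt6 (d : ℕ) (g : ℝ → EuclideanSpace ℝ (Fin d))
    (hgc : Continuous g) (hgi : Function.Injective g)
    (hcurve : ∀ v : EuclideanSpace ℝ (Fin d), v ≠ 0 → ∀ a : ℝ,
      ({t : ℝ | ⟪v, g t⟫ = a}).Finite ∧ ({t : ℝ | ⟪v, g t⟫ = a}).ncard ≤ d)
    (v : Fin d → EuclideanSpace ℝ (Fin d)) (a : Fin d → ℝ) (hv : ∀ i, v i ≠ 0) :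
    ({α : Fin d → Bool | (orthantD v a α ∩ Set.range g).Nonempty}).ncard ≤ d ^ 2 + 1 ∧
      ∀ μ : Measure (EuclideanSpace ℝ (Fin d)), μ (Set.range g)ᶜ = 0 → d ^ 2 + 1 < 2 ^ d →
        ∃ α : Fin d → Bool, μ (orthantD v a α) = 0 := by
  classical
  set S : Set (Fin d → Bool) := {α | (orthantD v a α ∩ Set.range g).Nonempty} with hS
  -- the set of all crossing parameters
  set Z : Set ℝ := ⋃ i : Fin d, {t | ⟪v i, g t⟫ = a i} with hZ
  have hZfin : Z.Finite := Set.finite_iUnion fun i => (hcurve (v i) (hv i) (a i)).1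
  have hZcard : Z.ncard ≤ d ^ 2 := by
    have hsub : Z ⊆ ↑(Finset.univ.biUnion fun i : Fin d =>
        ((hcurve (v i) (hv i) (a i)).1.toFinset)) := by
      intro t ht
      rw [hZ, Set.mem_iUnion] at ht
      obtain ⟨i, hi⟩ := ht
      simp only [Finset.coe_biUnion, Set.mem_iUnion, Finset.mem_coe, Set.Finite.mem_toFinset]
      exact ⟨i, Finset.mem_univ i, hi⟩
    calc Z.ncard ≤ (Finset.univ.biUnion fun i : Fin d =>
          ((hcurve (v i) (hv i) (a i)).1.toFinset)).card := by
          rw [← Set.ncard_coe_finset]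
          exact Set.ncard_le_ncard hsub (Set.toFinite _)
      _ ≤ ∑ i : Fin d, ((hcurve (v i) (hv i) (a i)).1.toFinset).card :=
          Finset.card_biUnion_le
      _ ≤ ∑ _i : Fin d, d := by
          apply Finset.sum_le_sum
          intro i _
          rw [← Set.ncard_eq_toFinset_card _ ((hcurve (v i) (hv i) (a i)).1)]
          exact (hcurve (v i) (hv i) (a i)).2
      _ = d ^ 2 := by simp [sq, Finset.sum_const, mul_comm]
  -- membership in orthants
  have hmem : ∀ (t : ℝ) (α : Fin d → Bool), g t ∈ orthantD v a α ↔
      ∀ i, if α i then a i < ⟪v i, g t⟫ else ⟪v i, g t⟫ < a i := by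
    intro t α
    simp only [orthantD, Set.mem_iInter, halfSpaceD]
    constructor
    · intro h i
      have := h i
      split at this <;> split <;> simp_all
    · intro h i
      have := h i
      split at this <;> simp_all
  -- choose witnesses
  have hwit : ∀ α ∈ S, ∃ t : ℝ, g t ∈ orthantD v a α := by
    rintro α ⟨x, hx1, t, rfl⟩
    exact ⟨t, hx1⟩
  choose! w hw using hwit
  -- witnesses are injective on S
  have hinjw : Set.InjOn w S := by
    intro α hα β hβ heq
    by_contra hne
    obtain ⟨i, hi⟩ : ∃ i, α i ≠ β i := by
      by_contra hc
      push_neg at hc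
      exact hne (funext hc)
    have hα' := (hmem (w α) α).1 (hw α hα) i
    have hβ' := (hmem (w β) β).1 (hw β hβ) i
    rw [heq] at hα'
    cases hαi : α i <;> cases hβi : β i <;> simp_all <;> linarith
  -- between two witnesses there is a crossing
  have hbetween : ∀ t ∈ w '' S, ∀ t' ∈ w '' S, t < t' → ∃ z ∈ Z, t < z ∧ z < t' := by
    rintro _ ⟨α, hα, rfl⟩ _ ⟨β, hβ, rfl⟩ hlt
    have hne : α ≠ β := by rintro rfl; exact lt_irrefl _ hlt
    obtain ⟨i, hi⟩ : ∃ i, α i ≠ β i := by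
      by_contra hc
      push_neg at hc
      exact hne (funext hc)
    have hα' := (hmem (w α) α).1 (hw α hα) i
    have hβ' := (hmem (w β) β).1 (hw β hβ) i
    have hcont : ContinuousOn (fun t => ⟪v i, g t⟫) (Set.Icc (w α) (w β)) :=
      (continuous_const.inner hgc).continuousOn
    have hivt : ∃ z ∈ Set.Ioo (w α) (w β), ⟪v i, g z⟫ = a i := by
      cases hαi : α i <;> cases hβi : β i <;> rw [hαi] at hα' <;> rw [hβi] at hβ' <;>
        (try simp only [if_true, Bool.false_eq_true, if_false, reduceIte] at hα' hβ')
      · exact absurd rfl (hαi ▸ hβi ▸ hi)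
      · -- α i = false, β i = true : f (w α) < a i < f (w β)
        have := intermediate_value_Ioo (le_of_lt hlt) hcont (Set.mem_Ioo.2 ⟨hα', hβ'⟩)
        obtain ⟨z, hz1, hz2⟩ := this
        exact ⟨z, hz1, hz2⟩
      · -- α i = true, β i = false : f (w β) < a i < f (w α)
        have := intermediate_value_Ioo' (le_of_lt hlt) hcont (Set.mem_Ioo.2 ⟨hβ', hα'⟩)
        obtain ⟨z, hz1, hz2⟩ := this
        exact ⟨z, hz1, hz2⟩
      · exact absurd rfl (hαi ▸ hβi ▸ hi)
    obtain ⟨z, hz1, hz2⟩ := hivt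
    refine ⟨z, ?_, hz1.1, hz1.2⟩
    rw [hZ, Set.mem_iUnion]
    exact ⟨i, hz2⟩
  have hSfin : S.Finite := Set.toFinite _
  have hmain : S.ncard ≤ d ^ 2 + 1 := by
    have h1 : (w '' S).ncard = S.ncard := Set.ncard_image_of_injOn hinjw
    have h2 := aux_card_between (w '' S) Z (hSfin.image w) hZfin hbetween
    omega
  refine ⟨hmain, ?_⟩
  intro μ hμ hlt
  have hSne : S ≠ Set.univ := by
    intro hcon
    have : S.ncard = 2 ^ d := by
      rw [hcon, Set.ncard_univ, Nat.card_eq_fintype_card]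
      simp
    omega
  obtain ⟨α, hα⟩ : ∃ α, α ∉ S := by
    by_contra hc
    push_neg at hc
    exact hSne (Set.eq_univ_of_forall hc)
  refine ⟨α, ?_⟩
  apply measure_mono_null _ hμ
  intro x hx
  simp only [Set.mem_compl_iff]
  intro hxr
  exact hα ⟨x, hx, hxr⟩
end
end

section
/- Let f : ℤ² → ℤ² be a map such that for every pair of adjacent lattice points p, q (differing by one unit in exactly one coordinate), f(p) and f(q) are equal or differ by one unit in exactly one coordinate (i.e., f maps grid steps to grid steps or fixed points). Let S be a unit grid square traversed as a closed grid curve of 4 steps. If the image closed polygonal curve of S under f does not pass through the origin, then its winding number about the origin is even (in fact zero). -/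
noncomputable section

/-- Two lattice points are adjacent if they differ by one unit in exactly one coordinate. -/
def Adjacent (p q : ℤ × ℤ) : Prop :=
  (p.1 = q.1 ∧ (p.2 - q.2).natAbs = 1) ∨ (p.2 = q.2 ∧ (p.1 - q.1).natAbs = 1)

/-- Signed crossing of the grid step `p → q` with the horizontal ray from the origin going
right (counted at height `y = 1/2`, positive `x`):  `+1` for an upward crossing, `-1` for a
downward crossing, `0` otherwise.  For a closed grid curve avoiding the origin, summing these
gives the topological winding number about the origin. -/
def crossing (p q : ℤ × ℤ) : ℤ :=
  if p.2 = 0 ∧ q.2 = 1 ∧ 0 < p.1 then 1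
  else if p.2 = 1 ∧ q.2 = 0 ∧ 0 < p.1 then -1
  else 0

/-- Winding number about the origin of a closed grid curve `c` (with `c 0 = c n`),
computed as the signed number of crossings of a horizontal ray from the origin. -/
def winding {n : ℕ} (c : Fin (n + 1) → ℤ × ℤ) : ℤ :=
  ∑ i : Fin n, crossing (c i.castSucc) (c i.succ)

/-- crossing with the left half of the line y = 1/2. -/
def crossingL (p q : ℤ × ℤ) : ℤ :=
  if p.2 = 0 ∧ q.2 = 1 ∧ p.1 ≤ 0 then 1
  else if p.2 = 1 ∧ q.2 = 0 ∧ p.1 ≤ 0 then -1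
  else 0

/-- potential: 1 if y ≥ 1 else 0. -/
def psi (p : ℤ × ℤ) : ℤ := if 1 ≤ p.2 then 1 else 0

theorem step_facts (p q : ℤ × ℤ) (h : p = q ∨ Adjacent p q) :
    (p.1 - q.1).natAbs ≤ 1 ∧ (p.2 - q.2).natAbs ≤ 1 ∧
    (p.1 ≠ q.1 → p.2 = q.2) ∧ (p.2 ≠ q.2 → p.1 = q.1) := by
  rcases h with h | h | h
  · subst h; simp
  · exact ⟨by omega, by omega, fun hx => absurd h.1 hx, fun _ => h.1⟩
  · exact ⟨by omega, by omega, fun _ => h.1, fun hy => absurd h.1 hy⟩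

theorem cross_add (p q : ℤ × ℤ) (h : (p.2 - q.2).natAbs ≤ 1) :
    crossing p q + crossingL p q = psi q - psi p := by
  unfold crossing crossingL psi
  split_ifs <;> omega

theorem crossing_ne (p q : ℤ × ℤ)
    (hs : (p.1 - q.1).natAbs ≤ 1 ∧ (p.2 - q.2).natAbs ≤ 1 ∧
      (p.1 ≠ q.1 → p.2 = q.2) ∧ (p.2 ≠ q.2 → p.1 = q.1))
    (h : crossing p q ≠ 0) : p.1 = q.1 ∧ 1 ≤ p.1 := by
  unfold crossing at h
  split_ifs at h with h1 h2 <;> [skip; skip; omega] <;>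
    exact ⟨hs.2.2.2 (by omega), by omega⟩

theorem crossingL_ne (p q : ℤ × ℤ)
    (hs : (p.1 - q.1).natAbs ≤ 1 ∧ (p.2 - q.2).natAbs ≤ 1 ∧
      (p.1 ≠ q.1 → p.2 = q.2) ∧ (p.2 ≠ q.2 → p.1 = q.1))
    (hp : p ≠ (0, 0)) (hq : q ≠ (0, 0))
    (h : crossingL p q ≠ 0) : p.1 = q.1 ∧ p.1 ≤ -1 := by
  unfold crossingL at h
  have hp' : p.1 ≠ 0 ∨ p.2 ≠ 0 := by
    rcases eq_or_ne p.1 0 with h1 | h1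
    · exact Or.inr fun h2 => hp (Prod.ext h1 h2)
    · exact Or.inl h1
  have hq' : q.1 ≠ 0 ∨ q.2 ≠ 0 := by
    rcases eq_or_ne q.1 0 with h1 | h1
    · exact Or.inr fun h2 => hq (Prod.ext h1 h2)
    · exact Or.inl h1
  split_ifs at h with h1 h2 <;> [skip; skip; omega] <;>
    · have hx : p.1 = q.1 := hs.2.2.2 (by omega)
      refine ⟨hx, ?_⟩
      omega

theorem key (a b c d : ℤ × ℤ)
    (hab : a = b ∨ Adjacent a b) (hbc : b = c ∨ Adjacent b c)
    (hcd : c = d ∨ Adjacent c d) (hda : d = a ∨ Adjacent d a)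
    (ha : a ≠ (0,0)) (hb : b ≠ (0,0)) (hc : c ≠ (0,0)) (hd : d ≠ (0,0)) :
    crossing a b + crossing b c + crossing c d + crossing d a = 0 := by
  have t1 := step_facts a b hab
  have t2 := step_facts b c hbc
  have t3 := step_facts c d hcd
  have t4 := step_facts d a hda
  have e1 := cross_add a b t1.2.1
  have e2 := cross_add b c t2.2.1
  have e3 := cross_add c d t3.2.1
  have e4 := cross_add d a t4.2.1
  by_contra hW
  -- then the total left-crossing is nonzero too
  have hL : crossingL a b + crossingL b c + crossingL c d + crossingL d a ≠ 0 := by omega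
  -- some crossing is nonzero, giving a vertical step at x ≥ 1
  have hR : ∃ P : Prop, P := ⟨True, trivial⟩
  have hpos : (a.1 = b.1 ∧ 1 ≤ a.1) ∨ (b.1 = c.1 ∧ 1 ≤ b.1) ∨
      (c.1 = d.1 ∧ 1 ≤ c.1) ∨ (d.1 = a.1 ∧ 1 ≤ d.1) := by
    rcases eq_or_ne (crossing a b) 0 with h1 | h1
    case inr => exact Or.inl (crossing_ne a b t1 h1)
    rcases eq_or_ne (crossing b c) 0 with h2 | h2
    case inr => exact Or.inr (Or.inl (crossing_ne b c t2 h2))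
    rcases eq_or_ne (crossing c d) 0 with h3 | h3
    case inr => exact Or.inr (Or.inr (Or.inl (crossing_ne c d t3 h3)))
    rcases eq_or_ne (crossing d a) 0 with h4 | h4
    case inr => exact Or.inr (Or.inr (Or.inr (crossing_ne d a t4 h4)))
    omega
  have hneg : (a.1 = b.1 ∧ a.1 ≤ -1) ∨ (b.1 = c.1 ∧ b.1 ≤ -1) ∨
      (c.1 = d.1 ∧ c.1 ≤ -1) ∨ (d.1 = a.1 ∧ d.1 ≤ -1) := by
    rcases eq_or_ne (crossingL a b) 0 with h1 | h1
    case inr => exact Or.inl (crossingL_ne a b t1 ha hb h1)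
    rcases eq_or_ne (crossingL b c) 0 with h2 | h2
    case inr => exact Or.inr (Or.inl (crossingL_ne b c t2 hb hc h2))
    rcases eq_or_ne (crossingL c d) 0 with h3 | h3
    case inr => exact Or.inr (Or.inr (Or.inl (crossingL_ne c d t3 hc hd h3)))
    rcases eq_or_ne (crossingL d a) 0 with h4 | h4
    case inr => exact Or.inr (Or.inr (Or.inr (crossingL_ne d a t4 hd ha h4)))
    omega
  have u1 := t1.1
  have u2 := t2.1
  have u3 := t3.1
  have u4 := t4.1
  omega

/-- If `f` maps grid steps to grid steps (or fixed points), and the image of a unit grid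
square avoids the origin, then the winding number of the image closed curve about the origin
is even — in fact zero. -/
theorem stmt7 (f : ℤ × ℤ → ℤ × ℤ)
    (hf : ∀ p q, Adjacent p q → f p = f q ∨ Adjacent (f p) (f q))
    (i j : ℤ) (S : Fin (4 + 1) → ℤ × ℤ)
    (hS : S = ![(i, j), (i + 1, j), (i + 1, j + 1), (i, j + 1), (i, j)])
    (h0 : ∀ t, f (S t) ≠ (0, 0)) :
    winding (fun t => f (S t)) = 0 := by
  subst hS
  have H := key (f (i, j)) (f (i + 1, j)) (f (i + 1, j + 1)) (f (i, j + 1))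
    ((hf (i, j) (i + 1, j)
      (Or.inr ⟨rfl, show (i - (i + 1)).natAbs = 1 by omega⟩)).imp id id)
    ((hf (i + 1, j) (i + 1, j + 1)
      (Or.inl ⟨rfl, show (j - (j + 1)).natAbs = 1 by omega⟩)).imp id id)
    ((hf (i + 1, j + 1) (i, j + 1)
      (Or.inr ⟨rfl, show (i + 1 - i).natAbs = 1 by omega⟩)).imp id id)
    ((hf (i, j + 1) (i, j)
      (Or.inl ⟨rfl, show (j + 1 - j).natAbs = 1 by omega⟩)).imp id id)
    (h0 0) (h0 1) (h0 2) (h0 3)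
  simpa [winding, Fin.sum_univ_four, Fin.succ, Fin.castSucc, Fin.castAdd, Fin.castLE]
    using H
end
end

section
/- Let C be a simple closed grid curve in ℤ² and let π map grid curves to grid curves (each step of C maps to a step or a fixed point). If the winding number of the image polygonal curve π(C) about the origin 0 is odd, then some lattice point enclosed by C (or on C) is mapped by π to the origin. -/
noncomputable section

/-- A grid step: consecutive points are equal or adjacent. -/
def GridStep (p q : ℤ × ℤ) : Prop := p = q ∨ Adjacent p q

/-- Winding number of a closed grid curve about an arbitrary lattice point `p`. -/
def windingAbout {n : ℕ} (c : Fin (n + 1) → ℤ × ℤ) (p : ℤ × ℤ) : ℤ :=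
  winding (fun t => ((c t).1 - p.1, (c t).2 - p.2))


def pe1 : ℤ × ℤ := (1, 0)
def pe2 : ℤ × ℤ := (0, 1)

def rc (a u v : ℤ × ℤ) : ℤ := crossing (u - a) (v - a)

def th (a u v : ℤ × ℤ) : ℤ :=
  (if u = a ∧ v = a + pe1 then 1 else 0) - (if u = a + pe1 ∧ v = a then 1 else 0)

def tv (a u v : ℤ × ℤ) : ℤ :=
  (if u = a ∧ v = a + pe2 then 1 else 0) - (if u = a + pe2 ∧ v = a then 1 else 0)

def gh (a u : ℤ × ℤ) : ℤ := if u.2 = a.2 ∧ a.1 < u.1 then 1 else 0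
def gv (a u : ℤ × ℤ) : ℤ := if a.2 < u.2 then 1 else 0



def sg (y : ℤ) : ℤ := if 1 ≤ y then 1 else 0

lemma crossing_self (p : ℤ × ℤ) : crossing p p = 0 := by
  unfold crossing; split_ifs <;> omega

lemma crossing_anti (p1 p2 q1 q2 : ℤ) (h : GridStep (p1,p2) (q1,q2)) :
    crossing (q1,q2) (p1,p2) = - crossing (p1,p2) (q1,q2) := by
  simp only [GridStep, Adjacent, Prod.mk.injEq] at h
  simp only [crossing]
  split_ifs <;> omega

lemma gridstep_cases {u v : ℤ × ℤ} (h : GridStep u v) :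
    u = v ∨ v = u + pe1 ∨ u = v + pe1 ∨ v = u + pe2 ∨ u = v + pe2 := by
  obtain ⟨u1, u2⟩ := u; obtain ⟨v1, v2⟩ := v
  simp only [GridStep, Adjacent, Prod.mk.injEq, pe1, pe2, Prod.mk_add_mk] at *
  omega

lemma adj_e1 (a : ℤ × ℤ) : Adjacent a (a + pe1) := by
  obtain ⟨a1, a2⟩ := a
  simp only [Adjacent, pe1, Prod.mk_add_mk]
  omega

lemma adj_e2 (a : ℤ × ℤ) : Adjacent a (a + pe2) := by
  obtain ⟨a1, a2⟩ := a
  simp only [Adjacent, pe2, Prod.mk_add_mk]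
  omega

lemma adj_symm {p q : ℤ × ℤ} (h : Adjacent p q) : Adjacent q p := by
  obtain ⟨p1, p2⟩ := p; obtain ⟨q1, q2⟩ := q
  simp only [Adjacent] at *
  omega

set_option maxHeartbeats 1000000 in
lemma step_tv {u v : ℤ × ℤ} (h : GridStep u v) (a : ℤ × ℤ) :
    tv a u v = rc (a - pe1) u v - rc a u v := by
  obtain ⟨u1, u2⟩ := u; obtain ⟨v1, v2⟩ := v; obtain ⟨a1, a2⟩ := a
  simp only [GridStep, Adjacent, Prod.mk.injEq, Int.natAbs_eq_iff] at h
  simp only [tv, rc, crossing, pe1, pe2, Prod.mk_sub_mk, Prod.mk_add_mk, Prod.mk.injEq]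
  rcases h with ⟨rfl, rfl⟩ | ⟨rfl, h2⟩ | ⟨rfl, h2⟩ <;> split_ifs <;> omega

set_option maxHeartbeats 8000000 in
lemma step_th {u v : ℤ × ℤ} (h : GridStep u v) (a : ℤ × ℤ) :
    th a u v - (rc a u v - rc (a - pe2) u v) = gh a v - gh a u := by
  obtain ⟨u1, u2⟩ := u; obtain ⟨v1, v2⟩ := v; obtain ⟨a1, a2⟩ := a
  simp only [GridStep, Adjacent, Prod.mk.injEq, Int.natAbs_eq_iff] at h
  simp only [th, rc, gh, crossing, pe1, pe2, Prod.mk_sub_mk, Prod.mk_add_mk, Prod.mk.injEq]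
  rcases h with ⟨rfl, rfl⟩ | ⟨rfl, h2⟩ | ⟨rfl, h2⟩ <;> split_ifs <;> omega

lemma rc_zero_row (p1 p2 u1 u2 : ℤ) (h1 : u2 ≠ p2) (h2 : u2 ≠ p2 + 1) (v : ℤ × ℤ) :
    rc (p1,p2) (u1,u2) v = 0 := by
  obtain ⟨v1, v2⟩ := v
  simp only [rc, crossing, Prod.mk_sub_mk]
  split_ifs <;> omega

lemma rc_zero_right (p1 p2 u1 u2 : ℤ) (h1 : u1 ≤ p1) (v : ℤ × ℤ) :
    rc (p1,p2) (u1,u2) v = 0 := by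
  obtain ⟨v1, v2⟩ := v
  simp only [rc, crossing, Prod.mk_sub_mk]
  split_ifs <;> omega

set_option maxHeartbeats 1000000 in
lemma step_rc_left {u v : ℤ × ℤ} (h : GridStep u v) (p1 p2 : ℤ)
    (h1 : p1 < u.1) (h2 : p1 < v.1) : rc (p1,p2) u v = gv (p1,p2) v - gv (p1,p2) u := by
  obtain ⟨u1, u2⟩ := u; obtain ⟨v1, v2⟩ := v
  simp only [GridStep, Adjacent, Prod.mk.injEq] at h
  simp only at h1 h2
  simp only [rc, gv, crossing, Prod.mk_sub_mk]
  split_ifs <;> omega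

lemma th_zero {a u v : ℤ × ℤ} (h1 : u ≠ a) (h2 : v ≠ a) : th a u v = 0 := by
  unfold th
  rw [if_neg (by tauto), if_neg (by tauto)]; ring

lemma th_zero' {a u v : ℤ × ℤ} (h1 : u ≠ a + pe1) (h2 : v ≠ a + pe1) : th a u v = 0 := by
  unfold th
  rw [if_neg (by tauto), if_neg (by tauto)]; ring

lemma tv_zero {a u v : ℤ × ℤ} (h1 : u ≠ a) (h2 : v ≠ a) : tv a u v = 0 := by
  unfold tv
  rw [if_neg (by tauto), if_neg (by tauto)]; ring

lemma th_alt (a u v : ℤ × ℤ) :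
    th a u v = (if a = u ∧ v = u + pe1 then 1 else 0) - (if a = v ∧ u = v + pe1 then 1 else 0) := by
  unfold th
  congr 1 <;> apply if_congr _ rfl rfl <;>
    constructor <;> rintro ⟨h1, h2⟩ <;> subst h1 <;> simp_all

lemma tv_alt (a u v : ℤ × ℤ) :
    tv a u v = (if a = u ∧ v = u + pe2 then 1 else 0) - (if a = v ∧ u = v + pe2 then 1 else 0) := by
  unfold tv
  congr 1 <;> apply if_congr _ rfl rfl <;>
    constructor <;> rintro ⟨h1, h2⟩ <;> subst h1 <;> simp_all

lemma notC_cr (a b a' b' : ℤ) (h : GridStep (a,b) (a',b'))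
    (hc : ¬(a = a' ∧ 1 ≤ a ∧ b + b' = 1 ∧ (b = 0 ∨ b = 1))) :
    crossing (a,b) (a',b') = 0 := by
  simp only [GridStep, Adjacent, Prod.mk.injEq] at h
  simp only [crossing]
  split_ifs <;> omega

lemma notD_cr (a b a' b' : ℤ) (h : GridStep (a,b) (a',b'))
    (hd : ¬(a = a' ∧ a ≤ 0 ∧ b + b' = 1 ∧ (b = 0 ∨ b = 1))) :
    crossing (a,b) (a',b') = sg b' - sg b := by
  simp only [GridStep, Adjacent, Prod.mk.injEq] at h
  simp only [crossing, sg]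
  split_ifs <;> omega

lemma gridstep_bounds (a b a' b' : ℤ) (h : GridStep (a,b) (a',b')) :
    (a = a' ∨ b = b') ∧ -1 ≤ a - a' ∧ a - a' ≤ 1 ∧ -1 ≤ b - b' ∧ b - b' ≤ 1 := by
  simp only [GridStep, Adjacent, Prod.mk.injEq] at h
  omega

set_option maxHeartbeats 1000000 in
lemma square_odd (q0 q1 q2 q3 : ℤ × ℤ)
    (h01 : GridStep q0 q1) (h12 : GridStep q1 q2) (h23 : GridStep q2 q3) (h30 : GridStep q3 q0)
    (hodd : Odd (crossing q0 q1 + crossing q1 q2 + crossing q2 q3 + crossing q3 q0)) :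
    q0 = (0, 0) ∨ q1 = (0, 0) ∨ q2 = (0, 0) ∨ q3 = (0, 0) := by
  obtain ⟨a0, b0⟩ := q0; obtain ⟨a1, b1⟩ := q1; obtain ⟨a2, b2⟩ := q2; obtain ⟨a3, b3⟩ := q3
  have hb01 := gridstep_bounds _ _ _ _ h01
  have hb12 := gridstep_bounds _ _ _ _ h12
  have hb23 := gridstep_bounds _ _ _ _ h23
  have hb30 := gridstep_bounds _ _ _ _ h30
  have hC : (a0 = a1 ∧ 1 ≤ a0 ∧ b0 + b1 = 1 ∧ (b0 = 0 ∨ b0 = 1)) ∨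
      (a1 = a2 ∧ 1 ≤ a1 ∧ b1 + b2 = 1 ∧ (b1 = 0 ∨ b1 = 1)) ∨
      (a2 = a3 ∧ 1 ≤ a2 ∧ b2 + b3 = 1 ∧ (b2 = 0 ∨ b2 = 1)) ∨
      (a3 = a0 ∧ 1 ≤ a3 ∧ b3 + b0 = 1 ∧ (b3 = 0 ∨ b3 = 1)) := by
    by_contra hno
    rw [notC_cr _ _ _ _ h01 (fun h => hno (Or.inl h)),
      notC_cr _ _ _ _ h12 (fun h => hno (Or.inr (Or.inl h))),
      notC_cr _ _ _ _ h23 (fun h => hno (Or.inr (Or.inr (Or.inl h)))),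
      notC_cr _ _ _ _ h30 (fun h => hno (Or.inr (Or.inr (Or.inr h))))] at hodd
    obtain ⟨k, hk⟩ := hodd
    omega
  have hD : (a0 = a1 ∧ a0 ≤ 0 ∧ b0 + b1 = 1 ∧ (b0 = 0 ∨ b0 = 1)) ∨
      (a1 = a2 ∧ a1 ≤ 0 ∧ b1 + b2 = 1 ∧ (b1 = 0 ∨ b1 = 1)) ∨
      (a2 = a3 ∧ a2 ≤ 0 ∧ b2 + b3 = 1 ∧ (b2 = 0 ∨ b2 = 1)) ∨
      (a3 = a0 ∧ a3 ≤ 0 ∧ b3 + b0 = 1 ∧ (b3 = 0 ∨ b3 = 1)) := by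
    by_contra hno
    rw [notD_cr _ _ _ _ h01 (fun h => hno (Or.inl h)),
      notD_cr _ _ _ _ h12 (fun h => hno (Or.inr (Or.inl h))),
      notD_cr _ _ _ _ h23 (fun h => hno (Or.inr (Or.inr (Or.inl h)))),
      notD_cr _ _ _ _ h30 (fun h => hno (Or.inr (Or.inr (Or.inr h))))] at hodd
    have hz : sg b1 - sg b0 + (sg b2 - sg b1) + (sg b3 - sg b2) + (sg b0 - sg b3) = 0 := by ring
    rw [hz] at hodd
    obtain ⟨k, hk⟩ := hodd
    omega
  simp only [Prod.mk.injEq]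
  rcases hC with hc | hc | hc | hc <;> rcases hD with hd | hd | hd | hd <;> omega



lemma shift_sum (g : ℤ × ℤ → ℤ) (w : ℤ × ℤ) (B : Finset (ℤ × ℤ))
    (h1 : ∀ a ∈ B, a + w ∉ B → g (a + w) = 0)
    (h2 : ∀ a ∈ B, a - w ∉ B → g a = 0) :
    ∑ a ∈ B, g (a + w) = ∑ a ∈ B, g a := by
  classical
  have himg : ∑ a ∈ B, g (a + w) = ∑ x ∈ B.image (· + w), g x := by
    rw [Finset.sum_image]
    intro x _ y _ hxy
    exact add_right_cancel hxy
  have hmem : ∀ x : ℤ × ℤ, x ∈ B.image (· + w) ↔ x - w ∈ B := by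
    intro x
    simp only [Finset.mem_image]
    constructor
    · rintro ⟨a, ha, rfl⟩; simpa [add_sub_cancel_right] using ha
    · intro h; exact ⟨x - w, h, sub_add_cancel x w⟩
  have e1 : ∑ x ∈ B.image (· + w), g x = ∑ x ∈ B ∪ B.image (· + w), g x := by
    apply Finset.sum_subset Finset.subset_union_right
    intro x hx hnx
    have hxB : x ∈ B := by
      rcases Finset.mem_union.1 hx with h | h
      · exact h
      · exact absurd h hnx
    exact h2 x hxB (fun hc => hnx ((hmem x).2 hc))
  have e2 : ∑ x ∈ B, g x = ∑ x ∈ B ∪ B.image (· + w), g x := by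
    apply Finset.sum_subset Finset.subset_union_left
    intro x hx hnx
    have hxI : x ∈ B.image (· + w) := by
      rcases Finset.mem_union.1 hx with h | h
      · exact absurd h hnx
      · exact h
    have hxw : x - w ∈ B := (hmem x).1 hxI
    have := h1 (x - w) hxw (by rwa [sub_add_cancel])
    rwa [sub_add_cancel] at this
  rw [himg, e1, e2]

lemma sum_ind (A : Finset (ℤ × ℤ)) (u : ℤ × ℤ) (hu : u ∈ A) (P : Prop) [Decidable P]
    (f : ℤ × ℤ → ℤ) :
    (∑ a ∈ A, if a = u ∧ P then f a else 0) = if P then f u else 0 := by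
  by_cases hP : P
  · simp only [hP, and_true, if_true]
    rw [Finset.sum_ite_eq' A u f, if_pos hu]
  · simp [hP]

lemma pe_ne1 (u : ℤ × ℤ) : u ≠ u + pe1 + pe1 := by
  obtain ⟨u1, u2⟩ := u; simp only [ne_eq, pe1, Prod.mk_add_mk, Prod.mk.injEq]; omega
lemma pe_ne2 (u : ℤ × ℤ) : u ≠ u + pe2 + pe2 := by
  obtain ⟨u1, u2⟩ := u; simp only [ne_eq, pe2, Prod.mk_add_mk, Prod.mk.injEq]; omega
lemma pe_ne3 (u : ℤ × ℤ) : u + pe1 ≠ u + pe2 := by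
  obtain ⟨u1, u2⟩ := u; simp only [ne_eq, pe1, pe2, Prod.mk_add_mk, Prod.mk.injEq]; omega
lemma pe_ne4 (u : ℤ × ℤ) : u ≠ u + pe1 + pe2 := by
  obtain ⟨u1, u2⟩ := u; simp only [ne_eq, pe1, pe2, Prod.mk_add_mk, Prod.mk.injEq]; omega
lemma pe_ne5 (u : ℤ × ℤ) : u ≠ u + pe2 + pe1 := by
  obtain ⟨u1, u2⟩ := u; simp only [ne_eq, pe1, pe2, Prod.mk_add_mk, Prod.mk.injEq]; omega
lemma pe_ne6 (u : ℤ × ℤ) : u ≠ u + pe1 := by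
  obtain ⟨u1, u2⟩ := u; simp only [ne_eq, pe1, Prod.mk_add_mk, Prod.mk.injEq]; omega
lemma pe_ne3' (u : ℤ × ℤ) : u + pe2 ≠ u + pe1 := by
  obtain ⟨u1, u2⟩ := u; simp only [ne_eq, pe1, pe2, Prod.mk_add_mk, Prod.mk.injEq]; omega
lemma pe_ne7 (u : ℤ × ℤ) : u ≠ u + pe2 := by
  obtain ⟨u1, u2⟩ := u; simp only [ne_eq, pe2, Prod.mk_add_mk, Prod.mk.injEq]; omega

lemma step_decomp (T : ℤ × ℤ → ℤ × ℤ)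
    (hT : ∀ p q, Adjacent p q → T p = T q ∨ Adjacent (T p) (T q))
    (A : Finset (ℤ × ℤ)) {u v : ℤ × ℤ} (hu : u ∈ A) (hv : v ∈ A) (huv : GridStep u v) :
    (∑ a ∈ A, (th a u v * crossing (T a) (T (a + pe1)) + tv a u v * crossing (T a) (T (a + pe2))))
      = crossing (T u) (T v) := by
  classical
  have hTanti : ∀ p q : ℤ × ℤ, Adjacent p q → crossing (T q) (T p) = - crossing (T p) (T q) := by
    intro p q hpq
    have : GridStep (T p) (T q) := hT p q hpq
    exact crossing_anti (T p).1 (T p).2 (T q).1 (T q).2 this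
  have hsplit : ∀ a : ℤ × ℤ,
      th a u v * crossing (T a) (T (a + pe1)) + tv a u v * crossing (T a) (T (a + pe2)) =
      ((if a = u ∧ v = u + pe1 then crossing (T a) (T (a + pe1)) else 0)
        - (if a = v ∧ u = v + pe1 then crossing (T a) (T (a + pe1)) else 0))
      + ((if a = u ∧ v = u + pe2 then crossing (T a) (T (a + pe2)) else 0)
        - (if a = v ∧ u = v + pe2 then crossing (T a) (T (a + pe2)) else 0)) := by
    intro a
    rw [th_alt, tv_alt]
    split_ifs <;> ring
  rw [Finset.sum_congr rfl (fun a _ => hsplit a), Finset.sum_add_distrib,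
    Finset.sum_sub_distrib, Finset.sum_sub_distrib,
    sum_ind A u hu _ _, sum_ind A v hv _ _, sum_ind A u hu _ _, sum_ind A v hv _ _]
  rcases gridstep_cases huv with rfl | h | h | h | h
  · simp only [eq_false (pe_ne6 u), eq_false (pe_ne7 u), if_false, crossing_self]
    ring
  · subst h
    simp only [eq_self_iff_true, eq_false (pe_ne1 u), eq_false (pe_ne3 u),
      eq_false (pe_ne4 u), if_true, if_false]
    ring
  · subst h
    simp only [eq_self_iff_true, eq_false (pe_ne1 v), eq_false (pe_ne4 v),
      eq_false (pe_ne3 v), if_true, if_false]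
    rw [hTanti v (v + pe1) (adj_e1 v)]
    ring
  · subst h
    simp only [eq_self_iff_true, eq_false (pe_ne3' u), eq_false (pe_ne5 u),
      eq_false (pe_ne2 u), if_true, if_false]
    ring
  · subst h
    simp only [eq_self_iff_true, eq_false (pe_ne5 v), eq_false (pe_ne3' v),
      eq_false (pe_ne2 v), if_true, if_false]
    rw [hTanti v (v + pe2) (adj_e2 v)]
    ring

/-- If `C` is a simple closed grid curve and `T` maps grid steps to grid steps (or fixed
points), and the image closed curve `T ∘ C` has odd winding number about the origin, then
some lattice point on `C` or enclosed by `C` (nonzero winding of `C` about it) is mapped by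
`T` to the origin. -/
theorem stmt8 (n : ℕ) (c : Fin (n + 1) → ℤ × ℤ)
    (hsteps : ∀ i : Fin n, GridStep (c i.castSucc) (c i.succ))
    (hclosed : c 0 = c (Fin.last n))
    (hsimple : ∀ i j : Fin n, c i.castSucc = c j.castSucc → i = j)
    (T : ℤ × ℤ → ℤ × ℤ)
    (hT : ∀ p q, Adjacent p q → T p = T q ∨ Adjacent (T p) (T q))
    (hodd : Odd (winding (fun t => T (c t)))) :
    ∃ p : ℤ × ℤ, ((∃ i, c i = p) ∨ windingAbout c p ≠ 0) ∧ T p = (0, 0) := by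
  classical
  by_contra hcon
  push_neg at hcon
  set d : ℕ → ℤ × ℤ := fun i => if h : i ≤ n then c ⟨i, Nat.lt_succ_of_le h⟩ else c 0 with hdd
  have hdval : ∀ (i : ℕ) (h : i ≤ n), d i = c ⟨i, Nat.lt_succ_of_le h⟩ := by
    intro i h
    simp only [hdd]
    rw [dif_pos h]
  have hstep' : ∀ i, i < n → GridStep (d i) (d (i + 1)) := by
    intro i hi
    rw [hdval i hi.le, hdval (i + 1) hi]
    exact hsteps ⟨i, hi⟩
  have hclosed' : d n = d 0 := by
    rw [hdval n le_rfl, hdval 0 (Nat.zero_le n)]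
    have h2 : (⟨0, Nat.lt_succ_of_le (Nat.zero_le n)⟩ : Fin (n + 1)) = 0 := by
      apply Fin.ext
      simp
    rw [h2]
    exact hclosed.symm
  set Np : ℤ × ℤ → ℤ := fun p => ∑ i ∈ Finset.range n, rc p (d i) (d (i + 1)) with hNp
  have hNpdef : ∀ p, Np p = ∑ i ∈ Finset.range n, rc p (d i) (d (i + 1)) := fun p => rfl
  have hNpw : ∀ p, Np p = windingAbout c p := by
    intro p
    have h1 : windingAbout c p = ∑ i : Fin n, rc p (d i.val) (d (i.val + 1)) := by
      unfold windingAbout winding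
      apply Finset.sum_congr rfl
      intro i _
      rw [hdval i.val i.isLt.le, hdval (i.val + 1) i.isLt]
      rfl
    rw [hNpdef, h1, Fin.sum_univ_eq_sum_range (fun k => rc p (d k) (d (k + 1))) n]
  have tele : ∀ g : ℤ × ℤ → ℤ, ∑ i ∈ Finset.range n, (g (d (i + 1)) - g (d i)) = 0 := by
    intro g
    rw [Finset.sum_range_sub (fun k => g (d k)) n, hclosed', sub_self]
  have hTv : ∀ a, ∑ i ∈ Finset.range n, tv a (d i) (d (i + 1)) = Np (a - pe1) - Np a := by
    intro a
    rw [hNpdef, hNpdef, ← Finset.sum_sub_distrib]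
    apply Finset.sum_congr rfl
    intro i hi
    exact step_tv (hstep' i (Finset.mem_range.1 hi)) a
  have hTh : ∀ a, ∑ i ∈ Finset.range n, th a (d i) (d (i + 1)) = Np a - Np (a - pe2) := by
    intro a
    have h1 : ∀ i ∈ Finset.range n, th a (d i) (d (i + 1)) =
        (rc a (d i) (d (i + 1)) - rc (a - pe2) (d i) (d (i + 1)))
          + (gh a (d (i + 1)) - gh a (d i)) := by
      intro i hi
      have h := step_th (hstep' i (Finset.mem_range.1 hi)) a
      linarith
    rw [Finset.sum_congr rfl h1, Finset.sum_add_distrib, tele (gh a), add_zero,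
      Finset.sum_sub_distrib, hNpdef, hNpdef]
  have hNp_row : ∀ p : ℤ × ℤ, (∀ i, i ≤ n → (d i).2 ≠ p.2 ∧ (d i).2 ≠ p.2 + 1) → Np p = 0 := by
    intro p hp
    rw [hNpdef]
    apply Finset.sum_eq_zero
    intro i hi
    have hi' := Finset.mem_range.1 hi
    exact rc_zero_row p.1 p.2 (d i).1 (d i).2 (hp i hi'.le).1 (hp i hi'.le).2 _
  have hNp_right : ∀ p : ℤ × ℤ, (∀ i, i ≤ n → (d i).1 ≤ p.1) → Np p = 0 := by
    intro p hp
    rw [hNpdef]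
    apply Finset.sum_eq_zero
    intro i hi
    have hi' := Finset.mem_range.1 hi
    exact rc_zero_right p.1 p.2 (d i).1 (d i).2 (hp i hi'.le) _
  have hNp_left : ∀ p : ℤ × ℤ, (∀ i, i ≤ n → p.1 < (d i).1) → Np p = 0 := by
    intro p hp
    have h1 : ∀ i ∈ Finset.range n, rc p (d i) (d (i + 1)) = gv p (d (i + 1)) - gv p (d i) := by
      intro i hi
      have hi' := Finset.mem_range.1 hi
      exact step_rc_left (hstep' i hi') p.1 p.2 (hp i hi'.le) (hp (i + 1) hi')
    rw [hNpdef, Finset.sum_congr rfl h1, tele (gv p)]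
  set Rn : ℕ := Finset.univ.sup (fun i : Fin (n + 1) => (c i).1.natAbs ⊔ (c i).2.natAbs) with hRn
  set R : ℤ := (Rn : ℤ) + 2 with hR
  have hb : ∀ i, i ≤ n → (d i).1.natAbs ≤ Rn ∧ (d i).2.natAbs ≤ Rn := by
    intro i hi
    rw [hdval i hi]
    have h := Finset.le_sup (f := fun i : Fin (n + 1) => (c i).1.natAbs ⊔ (c i).2.natAbs)
      (Finset.mem_univ (⟨i, Nat.lt_succ_of_le hi⟩ : Fin (n + 1)))
    rw [← hRn] at h
    exact ⟨le_trans (le_max_left _ _) h, le_trans (le_max_right _ _) h⟩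
  set A : Finset (ℤ × ℤ) := Finset.Icc (-R, -R) (R, R) with hA
  have hmemA : ∀ i, i ≤ n → d i ∈ A := by
    intro i hi
    have hbi := hb i hi
    rw [hA, Finset.mem_Icc, Prod.le_def, Prod.le_def]
    dsimp only
    constructor
    · constructor <;> omega
    · constructor <;> omega
  -- winding as a range sum
  have hwind : winding (fun t => T (c t))
      = ∑ i ∈ Finset.range n, crossing (T (d i)) (T (d (i + 1))) := by
    have h1 : winding (fun t => T (c t))
        = ∑ i : Fin n, crossing (T (d i.val)) (T (d (i.val + 1))) := by
      unfold winding
      apply Finset.sum_congr rfl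
      intro i _
      rw [hdval i.val i.isLt.le, hdval (i.val + 1) i.isLt]
      rfl
    rw [h1, Fin.sum_univ_eq_sum_range (fun k => crossing (T (d k)) (T (d (k + 1)))) n]
  -- membership bounds in coordinates
  have hAco : ∀ a : ℤ × ℤ, a ∈ A ↔ (-R ≤ a.1 ∧ -R ≤ a.2 ∧ a.1 ≤ R ∧ a.2 ≤ R) := by
    intro a
    rw [hA, Finset.mem_Icc, Prod.le_def, Prod.le_def]
    dsimp only
    tauto
  -- shift sums
  have hs1 : ∑ a ∈ A, Np (a - pe2) * crossing (T a) (T (a + pe1))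
      = ∑ a ∈ A, Np a * crossing (T (a + pe2)) (T (a + pe2 + pe1)) := by
    have h := shift_sum (fun a => Np a * crossing (T (a + pe2)) (T (a + pe2 + pe1))) (-pe2) A
      (by
        intro a ha hna
        have hz : Np (a + -pe2) = 0 := by
          apply hNp_row
          intro i hi
          have hbi := hb i hi
          rw [hAco] at ha hna
          simp only [pe1, pe2, Prod.fst_add, Prod.snd_add, Prod.fst_neg, Prod.snd_neg, Prod.fst_sub, Prod.snd_sub] at *
          constructor <;> omega
        simp only [hz, zero_mul])
      (by
        intro a ha hna
        have hz : Np a = 0 := by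
          apply hNp_row
          intro i hi
          have hbi := hb i hi
          rw [hAco] at ha hna
          simp only [pe1, pe2, Prod.fst_add, Prod.snd_add, Prod.fst_neg, Prod.snd_neg, Prod.fst_sub, Prod.snd_sub] at *
          constructor <;> omega
        simp only [hz, zero_mul])
    calc ∑ a ∈ A, Np (a - pe2) * crossing (T a) (T (a + pe1))
        = ∑ a ∈ A, Np (a + -pe2) * crossing (T (a + -pe2 + pe2)) (T (a + -pe2 + pe2 + pe1)) := by
          apply Finset.sum_congr rfl
          intro a _
          have e1 : a + -pe2 = a - pe2 := (sub_eq_add_neg a pe2).symm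
          have e2 : a - pe2 + pe2 = a := sub_add_cancel a pe2
          rw [e1, e2]
      _ = ∑ a ∈ A, Np a * crossing (T (a + pe2)) (T (a + pe2 + pe1)) := h
  have hs2 : ∑ a ∈ A, Np (a - pe1) * crossing (T a) (T (a + pe2))
      = ∑ a ∈ A, Np a * crossing (T (a + pe1)) (T (a + pe1 + pe2)) := by
    have h := shift_sum (fun a => Np a * crossing (T (a + pe1)) (T (a + pe1 + pe2))) (-pe1) A
      (by
        intro a ha hna
        have hz : Np (a + -pe1) = 0 := by
          apply hNp_left
          intro i hi
          have hbi := hb i hi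
          rw [hAco] at ha hna
          simp only [pe1, pe2, Prod.fst_add, Prod.snd_add, Prod.fst_neg, Prod.snd_neg, Prod.fst_sub, Prod.snd_sub] at *
          omega
        simp only [hz, zero_mul])
      (by
        intro a ha hna
        have hz : Np a = 0 := by
          apply hNp_right
          intro i hi
          have hbi := hb i hi
          rw [hAco] at ha hna
          simp only [pe1, pe2, Prod.fst_add, Prod.snd_add, Prod.fst_neg, Prod.snd_neg, Prod.fst_sub, Prod.snd_sub] at *
          omega
        simp only [hz, zero_mul])
    calc ∑ a ∈ A, Np (a - pe1) * crossing (T a) (T (a + pe2))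
        = ∑ a ∈ A, Np (a + -pe1) * crossing (T (a + -pe1 + pe1)) (T (a + -pe1 + pe1 + pe2)) := by
          apply Finset.sum_congr rfl
          intro a _
          have e1 : a + -pe1 = a - pe1 := (sub_eq_add_neg a pe1).symm
          have e2 : a - pe1 + pe1 = a := sub_add_cancel a pe1
          rw [e1, e2]
      _ = ∑ a ∈ A, Np a * crossing (T (a + pe1)) (T (a + pe1 + pe2)) := h
  have hTanti : ∀ p q : ℤ × ℤ, Adjacent p q → crossing (T q) (T p) = - crossing (T p) (T q) := by
    intro p q hpq
    exact crossing_anti (T p).1 (T p).2 (T q).1 (T q).2 (hT p q hpq)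
  -- main identity
  have hmain : winding (fun t => T (c t)) =
      ∑ a ∈ A, Np a * (crossing (T a) (T (a + pe1)) + crossing (T (a + pe1)) (T (a + pe1 + pe2))
        + crossing (T (a + pe1 + pe2)) (T (a + pe2)) + crossing (T (a + pe2)) (T a)) := by
    rw [hwind]
    have h2 : ∀ i ∈ Finset.range n, crossing (T (d i)) (T (d (i + 1))) =
        ∑ a ∈ A, (th a (d i) (d (i + 1)) * crossing (T a) (T (a + pe1))
          + tv a (d i) (d (i + 1)) * crossing (T a) (T (a + pe2))) := by
      intro i hi
      have hi' := Finset.mem_range.1 hi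
      exact (step_decomp T hT A (hmemA i hi'.le) (hmemA (i + 1) hi') (hstep' i hi')).symm
    rw [Finset.sum_congr rfl h2, Finset.sum_comm]
    have h3 : ∀ a ∈ A, (∑ i ∈ Finset.range n,
          (th a (d i) (d (i + 1)) * crossing (T a) (T (a + pe1))
            + tv a (d i) (d (i + 1)) * crossing (T a) (T (a + pe2))))
        = (Np a * crossing (T a) (T (a + pe1)) - Np (a - pe2) * crossing (T a) (T (a + pe1)))
          + (Np (a - pe1) * crossing (T a) (T (a + pe2))
            - Np a * crossing (T a) (T (a + pe2))) := by
      intro a _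
      rw [Finset.sum_add_distrib, ← Finset.sum_mul, ← Finset.sum_mul, hTh a, hTv a]
      ring
    rw [Finset.sum_congr rfl h3, Finset.sum_add_distrib, Finset.sum_sub_distrib,
      Finset.sum_sub_distrib, hs1, hs2, ← Finset.sum_sub_distrib, ← Finset.sum_sub_distrib,
      ← Finset.sum_add_distrib]
    apply Finset.sum_congr rfl
    intro a _
    have k1 : crossing (T (a + pe2)) (T (a + pe2 + pe1)) =
        - crossing (T (a + pe1 + pe2)) (T (a + pe2)) := by
      have hcm : a + pe2 + pe1 = a + pe1 + pe2 := add_right_comm a pe2 pe1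
      rw [hcm]
      have := hTanti (a + pe1 + pe2) (a + pe2) (by
        have h' := adj_e1 (a + pe2)
        rw [add_right_comm] at h'
        exact adj_symm h')
      linarith [this]
    have k2 : crossing (T a) (T (a + pe2)) = - crossing (T (a + pe2)) (T a) := by
      have := hTanti a (a + pe2) (adj_e2 a)
      linarith [this]
    rw [k1, k2]
    ring
  -- corner lemma
  have hcorner : ∀ q : ℤ × ℤ, (∀ i : Fin (n + 1), c i ≠ q) →
      Np (q - pe1) = Np q ∧ Np (q - pe2) = Np q ∧ Np (q - pe1 - pe2) = Np q := by
    intro q hq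
    have hno : ∀ i, i ≤ n → d i ≠ q := by
      intro i hi
      rw [hdval i hi]
      exact hq _
    have z1 : Np (q - pe1) - Np q = 0 := by
      rw [← hTv q]
      apply Finset.sum_eq_zero
      intro i hi
      have hi' := Finset.mem_range.1 hi
      exact tv_zero (hno i hi'.le) (hno (i + 1) hi')
    have z2 : Np q - Np (q - pe2) = 0 := by
      rw [← hTh q]
      apply Finset.sum_eq_zero
      intro i hi
      have hi' := Finset.mem_range.1 hi
      exact th_zero (hno i hi'.le) (hno (i + 1) hi')
    have z3 : Np (q - pe1) - Np (q - pe1 - pe2) = 0 := by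
      rw [← hTh (q - pe1)]
      apply Finset.sum_eq_zero
      intro i hi
      have hi' := Finset.mem_range.1 hi
      have hq1 : q - pe1 + pe1 = q := sub_add_cancel q pe1
      apply th_zero'
      · rw [hq1]
        exact hno i hi'.le
      · rw [hq1]
        exact hno (i + 1) hi'
    refine ⟨by linarith, by linarith, by linarith⟩
  -- every term is even
  have heven : ∀ a ∈ A, (2 : ℤ) ∣ Np a *
      (crossing (T a) (T (a + pe1)) + crossing (T (a + pe1)) (T (a + pe1 + pe2))
        + crossing (T (a + pe1 + pe2)) (T (a + pe2)) + crossing (T (a + pe2)) (T a)) := by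
    intro a _
    by_cases hz : Np a = 0
    · exact ⟨0, by rw [hz, zero_mul, mul_zero]⟩
    · rcases Int.even_or_odd (crossing (T a) (T (a + pe1))
          + crossing (T (a + pe1)) (T (a + pe1 + pe2))
          + crossing (T (a + pe1 + pe2)) (T (a + pe2))
          + crossing (T (a + pe2)) (T a)) with he | ho
      · obtain ⟨m, hm⟩ := he
        exact Dvd.dvd.mul_left ⟨m, by omega⟩ (Np a)
      · exfalso
        have hgs1 : GridStep (T a) (T (a + pe1)) := hT _ _ (adj_e1 a)
        have hgs2 : GridStep (T (a + pe1)) (T (a + pe1 + pe2)) := hT _ _ (adj_e2 (a + pe1))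
        have hgs3 : GridStep (T (a + pe1 + pe2)) (T (a + pe2)) := by
          apply hT
          apply adj_symm
          have h' := adj_e1 (a + pe2)
          rw [add_right_comm] at h'
          exact h'
        have hgs4 : GridStep (T (a + pe2)) (T a) := hT _ _ (adj_symm (adj_e2 a))
        have hsq := square_odd _ _ _ _ hgs1 hgs2 hgs3 hgs4 ho
        have hfin : ∀ s : ℤ × ℤ, T s = (0, 0) →
            (a = s ∨ a = s - pe1 ∨ a = s - pe2 ∨ a = s - pe1 - pe2) → False := by
          intro s hTs hcases
          have hnc : ∀ i : Fin (n + 1), c i ≠ s := by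
            intro i hi
            exact hcon s (Or.inl ⟨i, hi⟩) hTs
          have hw0 : Np s = 0 := by
            by_contra hw
            exact hcon s (Or.inr (by rw [← hNpw]; exact hw)) hTs
          have hc4 := hcorner s hnc
          rcases hcases with rfl | rfl | rfl | rfl
          · exact hz hw0
          · exact hz (hc4.1.trans hw0)
          · exact hz (hc4.2.1.trans hw0)
          · exact hz (hc4.2.2.trans hw0)
        rcases hsq with h | h | h | h
        · exact hfin a h (Or.inl rfl)
        · exact hfin (a + pe1) h (Or.inr (Or.inl (by ring)))
        · exact hfin (a + pe1 + pe2) h (Or.inr (Or.inr (Or.inr (by ring))))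
        · exact hfin (a + pe2) h (Or.inr (Or.inr (Or.inl (by ring))))
  have hdvd : (2 : ℤ) ∣ winding (fun t => T (c t)) := by
    rw [hmain]
    exact Finset.dvd_sum heven
  obtain ⟨k, hk⟩ := hodd
  obtain ⟨m, hm⟩ := hdvd
  omega
end
end

section
/- Let R and B be finite sets of non-vertical planes in general position in ℝ³ such that planes in R have positive slope in the x-direction and planes in B have negative slope in the x-direction (i.e., each plane has equation z = ax + by + c with a > 0 for R and a < 0 for B, and |R|, |B| are odd). Then the intersection L of the median level of the arrangement of R and the median level of the arrangement of B is a connected, y-monotone polygonal curve: for every d ∈ ℝ, the plane y = d meets L in exactly one point. -/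
/-!
On the slice `y = d` every plane becomes a line `x ↦ a x + c`, and a point of a median level is
a point `(x, z)` with `z` the median of the values of the lines at `x`. The median of a
finite family is monotone and `1`-Lipschitz in the values, because two strict majorities always
intersect; hence the median of the `R`-lines is a continuous strictly increasing function of `x`
and that of the `B`-lines a continuous strictly decreasing one. Far to the left every `R`-line is
below every `B`-line and far to the right above, so the two graphs cross, and by strict
monotonicity they cross exactly once.
-/

noncomputable section

/-- The height at `(x, y)` of the non-vertical plane `z = ax + by + c`, given by its
coefficient triple `q = (a, b, c)`. -/
def planeVal (q : ℝ × ℝ × ℝ) (x y : ℝ) : ℝ := q.1 * x + q.2.1 * y + q.2.2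

/-- Number of planes of `S` strictly below the point `p = (x, y, z)`. -/
def belowCnt (S : Finset (ℝ × ℝ × ℝ)) (p : ℝ × ℝ × ℝ) : ℕ :=
  (S.filter fun q => planeVal q p.1 p.2.1 < p.2.2).card

/-- Number of planes of `S` strictly above the point `p = (x, y, z)`. -/
def aboveCnt (S : Finset (ℝ × ℝ × ℝ)) (p : ℝ × ℝ × ℝ) : ℕ :=
  (S.filter fun q => p.2.2 < planeVal q p.1 p.2.1).card

/-- The median level of the arrangement of a set `S` of `2m + 1` planes: the points with at
most `m` planes strictly below and at most `m` planes strictly above. -/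
def medLevel (S : Finset (ℝ × ℝ × ℝ)) (m : ℕ) : Set (ℝ × ℝ × ℝ) :=
  {p | belowCnt S p ≤ m ∧ aboveCnt S p ≤ m}

open Filter Finset

section Median

variable {ι α : Type*} [LinearOrder α] {s : Finset ι} {f g : ι → α} {z w : α}

def IsMedian (s : Finset ι) (f : ι → α) (z : α) : Prop :=
  2 * #{i ∈ s | f i < z} < #s ∧ 2 * #{i ∈ s | z < f i} < #s

theorem IsMedian.exists_le_le (hz : IsMedian s f z) (hw : IsMedian s g w) :
    ∃ i ∈ s, z ≤ f i ∧ g i ≤ w := by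
  -- two strict majorities of `s` intersect
  by_contra! h
  have hsub : {i ∈ s | ¬ f i < z} ⊆ {i ∈ s | w < g i} := by
    intro i hi
    simp only [mem_filter, not_lt] at hi ⊢
    exact ⟨hi.1, h i hi.1 hi.2⟩
  have := card_filter_add_card_filter_not (s := s) (fun i => f i < z)
  have := card_le_card hsub
  have := hz.1
  have := hw.2
  omega

theorem IsMedian.exists_eq (hz : IsMedian s f z) : ∃ i ∈ s, f i = z := by
  obtain ⟨i, hi, h₁, h₂⟩ := hz.exists_le_le hz
  exact ⟨i, hi, le_antisymm h₂ h₁⟩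

theorem IsMedian.unique (hz : IsMedian s f z) (hw : IsMedian s f w) : z = w := by
  obtain ⟨i, -, hzi, hiw⟩ := hz.exists_le_le hw
  obtain ⟨j, -, hwj, hjz⟩ := hw.exists_le_le hz
  exact le_antisymm (hzi.trans hiw) (hwj.trans hjz)

theorem IsMedian.isMedian_iff (hw : IsMedian s f w) : IsMedian s f z ↔ z = w :=
  ⟨fun hz => hz.unique hw, fun h => h ▸ hw⟩

theorem IsMedian.lt_of_forall_lt (hz : IsMedian s f z) (hw : IsMedian s g w)
    (h : ∀ i ∈ s, f i < g i) : z < w := by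
  obtain ⟨i, hi, hzi, hiw⟩ := hz.exists_le_le hw
  exact hzi.trans_lt ((h i hi).trans_le hiw)

theorem IsMedian.lt_of_forall_forall_lt {κ : Type*} {t : Finset κ} {g : κ → α}
    (hz : IsMedian s f z) (hw : IsMedian t g w) (h : ∀ i ∈ s, ∀ j ∈ t, f i < g j) : z < w := by
  obtain ⟨i, hi, rfl⟩ := hz.exists_eq
  obtain ⟨j, hj, rfl⟩ := hw.exists_eq
  exact h i hi j hj

theorem exists_isMedian (hs : Odd #s) (f : ι → α) : ∃ z, IsMedian s f z := by
  obtain ⟨m, hm⟩ := hs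
  set T := {j ∈ s | #s < 2 * #{i ∈ s | f i ≤ f j}}
  have hT : T.Nonempty := by
    obtain ⟨k, hks, hk⟩ := exists_max_image s f (card_pos.1 (by omega))
    refine ⟨k, mem_filter.2 ⟨hks, ?_⟩⟩
    rw [filter_true_of_mem hk]
    omega
  -- The median is the least value with a majority of values at or below it.
  obtain ⟨j, hjT, hj⟩ := exists_min_image T f hT
  obtain ⟨hjs, hjmaj⟩ := mem_filter.1 hjT
  refine ⟨f j, ?_, ?_⟩
  · by_contra! hlow
    obtain ⟨k, hkU, hk⟩ := exists_max_image {i ∈ s | f i < f j} f (card_pos.1 (by omega))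
    obtain ⟨hks, hkj⟩ := mem_filter.1 hkU
    have hsub : {i ∈ s | f i < f j} ⊆ {i ∈ s | f i ≤ f k} := fun i hi =>
      mem_filter.2 ⟨(mem_filter.1 hi).1, hk i hi⟩
    have hkT : k ∈ T := mem_filter.2 ⟨hks, by have := card_le_card hsub; omega⟩
    exact (hj k hkT).not_gt hkj
  · have := card_filter_add_card_filter_not (s := s) (fun i => f i ≤ f j)
    simp only [not_le] at this
    omega

theorem IsMedian.le_add [Add α] [AddRightMono α] {c : α} (hz : IsMedian s f z)
    (hw : IsMedian s g w) (h : ∀ i ∈ s, f i ≤ g i + c) : z ≤ w + c := by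
  obtain ⟨i, hi, hzi, hiw⟩ := hz.exists_le_le hw
  exact hzi.trans ((h i hi).trans (add_le_add_left hiw c))

end Median

section MedianOfFunctions

variable {ι α : Type*} {s : Finset ι} {f : ι → α → ℝ} {F : α → ℝ}

theorem lipschitzWith_of_isMedian [PseudoMetricSpace α] {K : NNReal}
    (hf : ∀ i ∈ s, LipschitzWith K (f i)) (hF : ∀ x, IsMedian s (f · x) (F x)) :
    LipschitzWith K F :=
  LipschitzWith.of_le_add_mul K fun x y => (hF x).le_add (hF y) fun i hi => (hf i hi).le_add_mul x y

theorem strictMono_of_isMedian [Preorder α] (hf : ∀ i ∈ s, StrictMono (f i))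
    (hF : ∀ x, IsMedian s (f · x) (F x)) : StrictMono F :=
  fun _ _ hxy => (hF _).lt_of_forall_lt (hF _) fun i hi => hf i hi hxy

theorem strictAnti_of_isMedian [Preorder α] (hf : ∀ i ∈ s, StrictAnti (f i))
    (hF : ∀ x, IsMedian s (f · x) (F x)) : StrictAnti F :=
  fun _ _ hxy => (hF _).lt_of_forall_lt (hF _) fun i hi => hf i hi hxy

end MedianOfFunctions

theorem existsUnique_eq_of_strictMono_of_strictAnti {F G : ℝ → ℝ} (hFc : Continuous F)
    (hGc : Continuous G) (hF : StrictMono F) (hG : StrictAnti G) {a b : ℝ} (ha : F a ≤ G a)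
    (hb : G b ≤ F b) : ∃! x, F x = G x := by
  have hmem : (0 : ℝ) ∈ Set.uIcc (F a - G a) (F b - G b) :=
    Set.mem_uIcc.2 (Or.inl ⟨by linarith, by linarith⟩)
  obtain ⟨x, -, hx⟩ := intermediate_value_uIcc (hFc.sub hGc).continuousOn hmem
  refine ⟨x, sub_eq_zero.1 hx, fun y hy => ?_⟩
  rcases lt_trichotomy y x with h | h | h
  · linarith [hF h, hG h, sub_eq_zero.1 hx]
  · exact h
  · linarith [hF h, hG h, sub_eq_zero.1 hx]

section Planes

theorem mem_medLevel_iff {S : Finset (ℝ × ℝ × ℝ)} {m : ℕ} (hS : #S = 2 * m + 1) (x y z : ℝ) :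
    (x, y, z) ∈ medLevel S m ↔ IsMedian S (planeVal · x y) z := by
  change belowCnt S (x, y, z) ≤ m ∧ aboveCnt S (x, y, z) ≤ m ↔ _
  simp only [belowCnt, aboveCnt, IsMedian, hS]
  omega

theorem planeVal_eq_mul_add (q : ℝ × ℝ × ℝ) (x y : ℝ) :
    planeVal q x y = q.1 * x + planeVal q 0 y := by
  simp only [planeVal]; ring

theorem lipschitzWith_planeVal (q : ℝ × ℝ × ℝ) (y : ℝ) :
    LipschitzWith ‖q.1‖₊ (planeVal q · y) :=
  LipschitzWith.of_le_add_mul _ fun x x' => by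
    rw [planeVal_eq_mul_add q x, planeVal_eq_mul_add q x', Real.dist_eq, coe_nnnorm,
      Real.norm_eq_abs, ← abs_mul]
    linarith [le_abs_self (q.1 * (x - x'))]

theorem strictMono_planeVal {q : ℝ × ℝ × ℝ} (hq : 0 < q.1) (y : ℝ) :
    StrictMono (planeVal q · y) := fun x x' h => by
  simp only [planeVal]; nlinarith

theorem strictAnti_planeVal {q : ℝ × ℝ × ℝ} (hq : q.1 < 0) (y : ℝ) :
    StrictAnti (planeVal q · y) := fun x x' h => by
  simp only [planeVal]; nlinarith

theorem eventually_planeVal_lt_atTop {q r : ℝ × ℝ × ℝ} (h : q.1 < r.1) (y : ℝ) :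
    ∀ᶠ x in atTop, planeVal q x y < planeVal r x y := by
  filter_upwards [eventually_gt_atTop ((planeVal q 0 y - planeVal r 0 y) / (r.1 - q.1))] with x hx
  rw [div_lt_iff₀ (sub_pos.2 h)] at hx
  rw [planeVal_eq_mul_add q, planeVal_eq_mul_add r]
  linarith

theorem eventually_planeVal_lt_atBot {q r : ℝ × ℝ × ℝ} (h : q.1 < r.1) (y : ℝ) :
    ∀ᶠ x in atBot, planeVal r x y < planeVal q x y := by
  filter_upwards [eventually_lt_atBot ((planeVal q 0 y - planeVal r 0 y) / (r.1 - q.1))] with x hx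
  rw [lt_div_iff₀ (sub_pos.2 h)] at hx
  rw [planeVal_eq_mul_add q, planeVal_eq_mul_add r]
  linarith

theorem eventually_forall_planeVal_lt_atTop {s t : Finset (ℝ × ℝ × ℝ)}
    (h : ∀ q ∈ s, ∀ r ∈ t, q.1 < r.1) (y : ℝ) :
    ∀ᶠ x in atTop, ∀ q ∈ s, ∀ r ∈ t, planeVal q x y < planeVal r x y := by
  simp only [eventually_all_finset]
  exact fun q hq r hr => eventually_planeVal_lt_atTop (h q hq r hr) y

theorem eventually_forall_planeVal_lt_atBot {s t : Finset (ℝ × ℝ × ℝ)}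
    (h : ∀ q ∈ s, ∀ r ∈ t, q.1 < r.1) (y : ℝ) :
    ∀ᶠ x in atBot, ∀ q ∈ s, ∀ r ∈ t, planeVal r x y < planeVal q x y := by
  simp only [eventually_all_finset]
  exact fun q hq r hr => eventually_planeVal_lt_atBot (h q hq r hr) y

theorem exists_continuous_isMedian_planeVal {S : Finset (ℝ × ℝ × ℝ)} (hS : Odd #S) (y : ℝ) :
    ∃ F : ℝ → ℝ, Continuous F ∧ ∀ x, IsMedian S (planeVal · x y) (F x) := by
  choose F hF using fun x => exists_isMedian hS (planeVal · x y)
  have hLip : ∀ q ∈ S, LipschitzWith (S.sup fun q => ‖q.1‖₊) (planeVal q · y) :=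
    fun q hq => (lipschitzWith_planeVal q y).weaken (le_sup (f := fun q => ‖q.1‖₊) hq)
  exact ⟨F, (lipschitzWith_of_isMedian hLip hF).continuous, hF⟩

end Planes

/-- If `R` consists of an odd number of planes with positive `x`-slope and `B` of an odd
number of planes with negative `x`-slope, then the intersection `L` of the two median levels
is a connected `y`-monotone curve: every plane `y = d` meets `L` in exactly one point. -/
theorem stmt16 (R B : Finset (ℝ × ℝ × ℝ)) (mR mB : ℕ)
    (hR : R.card = 2 * mR + 1) (hB : B.card = 2 * mB + 1)
    (hRs : ∀ q ∈ R, 0 < q.1) (hBs : ∀ q ∈ B, q.1 < 0) :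
    ∀ d : ℝ, ∃! p : ℝ × ℝ × ℝ, p ∈ medLevel R mR ∩ medLevel B mB ∧ p.2.1 = d := by
  intro d
  obtain ⟨F, hFc, hF⟩ := exists_continuous_isMedian_planeVal ⟨mR, hR⟩ d
  obtain ⟨G, hGc, hG⟩ := exists_continuous_isMedian_planeVal ⟨mB, hB⟩ d
  have hmem : ∀ x z, (x, d, z) ∈ medLevel R mR ∩ medLevel B mB ↔ z = F x ∧ z = G x :=
    fun x z => by
      rw [Set.mem_inter_iff, mem_medLevel_iff hR, mem_medLevel_iff hB, (hF x).isMedian_iff,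
        (hG x).isMedian_iff]
  have hslope : ∀ r ∈ B, ∀ q ∈ R, r.1 < q.1 := fun r hr q hq => (hBs r hr).trans (hRs q hq)
  obtain ⟨a, ha⟩ := (eventually_forall_planeVal_lt_atBot hslope d).exists
  obtain ⟨b, hb⟩ := (eventually_forall_planeVal_lt_atTop hslope d).exists
  obtain ⟨x, hx, hxu⟩ := existsUnique_eq_of_strictMono_of_strictAnti hFc hGc
    (strictMono_of_isMedian (fun q hq => strictMono_planeVal (hRs q hq) d) hF)
    (strictAnti_of_isMedian (fun q hq => strictAnti_planeVal (hBs q hq) d) hG)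
    ((hF a).lt_of_forall_forall_lt (hG a) fun q hq r hr => ha r hr q hq).le
    ((hG b).lt_of_forall_forall_lt (hF b) hb).le
  refine ⟨(x, d, F x), ⟨(hmem x _).2 ⟨rfl, hx⟩, rfl⟩, ?_⟩
  rintro ⟨x', _, z⟩ ⟨hp, rfl⟩
  obtain ⟨rfl, hz⟩ := (hmem x' z).1 hp
  rw [hxu x' hz]
end
end
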